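/- Fiberwise form of Thm. 5.17 (vanishing of the Ricci scalar): Let n ≥ 2 and let (C, L) be a properly Lorentz fiberwise datum on ℝ^n, and let κ ∈ ℝ with κ ≠ 0 and κ < 2n. If f is smooth and positively 2-homogeneous on an open conic neighborhood of C̄ and satisfies κ f − L g^{ab} f_{·a·b} = 0 on C, then f = 0 on C̄. In particular, for n ≥ 3, any such f satisfying the Finslerian metric variational equation (n+2) f − L g^{ab} f_{·a·b} = 0 on C vanishes identically; applied to f = Ric, the Ricci scalar of any nonlinear connection smoothly extendible to the boundary, this yields Theorem C of the paper. -/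

import Mathlib

open scoped BigOperators

noncomputable section

/-- Partial derivative `∂f/∂y^i`. -/
def pd {n : ℕ} (f : (Fin n → ℝ) → ℝ) (i : Fin n) : (Fin n → ℝ) → ℝ :=
  fun y => fderiv ℝ f y (Pi.single i 1)

/-- `C` is a conic set: stable under positive scalings. -/
def Conic {n : ℕ} (C : Set (Fin n → ℝ)) : Prop :=
  ∀ ⦃y⦄, y ∈ C → ∀ ⦃t : ℝ⦄, 0 < t → t • y ∈ C

/-- `f` is positively `α`-homogeneous on `C`. -/
def PosHom {n : ℕ} (α : ℝ) (C : Set (Fin n → ℝ)) (f : (Fin n → ℝ) → ℝ) : Prop :=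
  ∀ y ∈ C, ∀ t : ℝ, 0 < t → f (t • y) = t ^ α * f y

/-- Vector-valued positively `α`-homogeneous map on `C`. -/
def PosHomMap {n : ℕ} (α : ℝ) (C : Set (Fin n → ℝ)) (Z : (Fin n → ℝ) → Fin n → ℝ) : Prop :=
  ∀ y ∈ C, ∀ t : ℝ, 0 < t → Z (t • y) = t ^ α • Z y

/-- Fundamental tensor `g_ij(y) = (1/2) L_{·i·j}(y)`. -/
def gmet {n : ℕ} (L : (Fin n → ℝ) → ℝ) (y : Fin n → ℝ) : Matrix (Fin n) (Fin n) ℝ :=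
  Matrix.of fun i j => (1 / 2) * pd (pd L i) j y

/-- Inverse fundamental tensor `g^{ij}`. -/
def ginv {n : ℕ} (L : (Fin n → ℝ) → ℝ) (y : Fin n → ℝ) : Matrix (Fin n) (Fin n) ℝ :=
  (gmet L y)⁻¹

/-- Lowered index `y_i = g_{ia} y^a`. -/
def yLow {n : ℕ} (L : (Fin n → ℝ) → ℝ) (y : Fin n → ℝ) (i : Fin n) : ℝ :=
  ∑ a, gmet L y i a * y a

/-- Cartan tensor `C_{ijk} = (1/2) g_{ij·k}`. -/
def cartan {n : ℕ} (L : (Fin n → ℝ) → ℝ) (i j k : Fin n) : (Fin n → ℝ) → ℝ :=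
  fun y => (1 / 2) * pd (fun z => gmet L z i j) k y

/-- Mean Cartan tensor `C_i = g^{ab} C_{abi}`. -/
def meanCartan {n : ℕ} (L : (Fin n → ℝ) → ℝ) (i : Fin n) : (Fin n → ℝ) → ℝ :=
  fun y => ∑ a, ∑ b, ginv L y a b * cartan L a b i y

/-- A fiberwise pseudo-Finsler datum on `ℝ^n`. -/
structure FinslerDatum (n : ℕ) (C : Set (Fin n → ℝ)) (L : (Fin n → ℝ) → ℝ) : Prop where
  openC : IsOpen C
  nzC : ∀ y ∈ C, y ≠ 0
  conicC : Conic C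
  smoothL : ContDiffOn ℝ (⊤ : ℕ∞) L C
  homL : PosHom 2 C L
  LneC : ∀ y ∈ C, L y ≠ 0
  gInvC : ∀ y ∈ C, IsUnit (gmet L y).det

/-- Closure of `C` inside `ℝ^n ∖ {0}`. -/
def clos {n : ℕ} (C : Set (Fin n → ℝ)) : Set (Fin n → ℝ) := closure C \ {0}

/-- A proper fiberwise datum on `ℝ^n`. -/
structure ProperDatum (n : ℕ) (C U : Set (Fin n → ℝ)) (L : (Fin n → ℝ) → ℝ) : Prop where
  connC : IsConnected C
  openC : IsOpen C
  conicC : Conic C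
  nzC : ∀ y ∈ C, y ≠ 0
  openU : IsOpen U
  conicU : Conic U
  nzU : ∀ y ∈ U, y ≠ 0
  closSub : clos C ⊆ U
  smoothL : ContDiffOn ℝ (⊤ : ℕ∞) L U
  homL : PosHom 2 U L
  posC : ∀ y ∈ C, 0 < L y
  zeroBd : ∀ y ∈ clos C \ C, L y = 0
  gInvU : ∀ y ∈ U, IsUnit (gmet L y).det

/-- Lorentzian signature `(+,−,…,−)` of a symmetric matrix, via Sylvester normal form. -/
def LorentzSignature {n : ℕ} (g : Matrix (Fin n) (Fin n) ℝ) : Prop :=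
  ∃ P : Matrix (Fin n) (Fin n) ℝ, IsUnit P.det ∧
    P.transpose * g * P = Matrix.diagonal (fun i : Fin n => if (i : ℕ) = 0 then (1 : ℝ) else -1)

/-- A properly Lorentz fiberwise datum on `ℝ^n`. -/
structure LorentzDatum (n : ℕ) (C U : Set (Fin n → ℝ)) (L : (Fin n → ℝ) → ℝ)
    extends ProperDatum n C U L : Prop where
  lorentz : ∀ y ∈ clos C, LorentzSignature (gmet L y)
  halfspace : ∃ φ : (Fin n → ℝ) →ₗ[ℝ] ℝ, φ ≠ 0 ∧ ∀ v ∈ clos C, 0 < φ v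

/-- `σ^Z = y_a Z^a / L`. -/
def sigmaZ {n : ℕ} (L : (Fin n → ℝ) → ℝ) (Z : (Fin n → ℝ) → Fin n → ℝ) :
    (Fin n → ℝ) → ℝ :=
  fun y => (∑ a, yLow L y a * Z y a) / L y

/-- `K^Z_i = −(2/(n+2)) (2 C_{a·i} Z^a + C_a Z^a_{·i})`. -/
def Kten {n : ℕ} (L : (Fin n → ℝ) → ℝ) (Z : (Fin n → ℝ) → Fin n → ℝ) (i : Fin n) :
    (Fin n → ℝ) → ℝ :=
  fun y => -(2 / ((n : ℝ) + 2)) *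
    (2 * ∑ a, pd (meanCartan L a) i y * Z y a + ∑ a, meanCartan L a y * pd (fun z => Z z a) i y)

/-!
Replacing `f` by `-f`, it suffices to show `f ≤ 0`. On `∂C` the equation and `L = 0` force
`f = 0`. Pick a linear `φ > 0` on the closure and, for `ε > 0`, maximise the 0-homogeneous ratio
`w = f / (L + ε φ²)` over the compact slice of the closure by the unit sphere. At a maximum
`y₀ ∈ C` with `w y₀ > 0`, the Hessian of `w` is negative semidefinite and kills `y₀`; as `g(y₀)` is
Lorentzian with `g(y₀, y₀) = L y₀ > 0`, the reverse Cauchy–Schwarz inequality writes `g⁻¹` as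
`y₀ y₀ᵀ / L y₀` minus a positive semidefinite matrix, so `g^{ab} w_{·a·b} ≥ 0`. Inserted in the
equation this gives `(2n - κ) L y₀ ≤ c ε` with `c` depending only on `(C, L, κ, φ)`. Hence a bound
`f ≤ K L` on `C` improves to `f ≤ θ K L` with `θ < 1` independent of `K`, and iterating from the
bound `f ≤ K₀ L` that the equation provides on the slice gives `f ≤ 0`.
-/

open Matrix Filter Topology Set

section Calculus

variable {n : ℕ} {O : Set (Fin n → ℝ)} {f g : (Fin n → ℝ) → ℝ} {y : Fin n → ℝ}

lemma fderiv_apply_eq_sum_pd (f : (Fin n → ℝ) → ℝ) (y v : Fin n → ℝ) :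
    fderiv ℝ f y v = ∑ a, v a * pd f a y := by
  conv_lhs => rw [← Finset.univ_sum_single v]
  simp only [map_sum, pd]
  refine Finset.sum_congr rfl fun a _ => ?_
  rw [← smul_eq_mul, ← map_smul]
  congr 1
  ext j
  simp [Pi.single_apply]

lemma pd_add (hf : DifferentiableAt ℝ f y) (hg : DifferentiableAt ℝ g y) (i : Fin n) :
    pd (fun z => f z + g z) i y = pd f i y + pd g i y := by
  simp [pd, fderiv_fun_add hf hg]

lemma pd_const_mul (c : ℝ) (hf : DifferentiableAt ℝ f y) (i : Fin n) :
    pd (fun z => c * f z) i y = c * pd f i y := by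
  simp [pd, fderiv_const_mul hf c]

lemma pd_mul (hf : DifferentiableAt ℝ f y) (hg : DifferentiableAt ℝ g y) (i : Fin n) :
    pd (fun z => f z * g z) i y = pd f i y * g y + f y * pd g i y := by
  simp [pd, fderiv_fun_mul hf hg]
  ring

lemma Filter.EventuallyEq.pd (h : f =ᶠ[𝓝 y] g) (i : Fin n) : pd f i =ᶠ[𝓝 y] pd g i :=
  (h.fderiv (𝕜 := ℝ)).mono fun _ hz => by simp only [_root_.pd, hz]

lemma ContDiffOn.pd_of_isOpen {k m : WithTop ℕ∞} (hf : ContDiffOn ℝ m f O) (hO : IsOpen O)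
    (hkm : k + 1 ≤ m) (i : Fin n) : ContDiffOn ℝ k (pd f i) O :=
  (hf.fderiv_of_isOpen hO hkm).clm_apply contDiffOn_const

lemma hasDerivAt_comp_add_smul {v : Fin n → ℝ} {s : ℝ}
    (hf : DifferentiableAt ℝ f (y + s • v)) :
    HasDerivAt (fun s => f (y + s • v)) (∑ a, v a * pd f a (y + s • v)) s := by
  rw [← fderiv_apply_eq_sum_pd]
  have hline : HasDerivAt (fun s : ℝ => y + s • v) v s := by
    simpa using ((hasDerivAt_id s).smul_const v).const_add y
  exact hf.hasFDerivAt.comp_hasDerivAt s hline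

end Calculus

section Homogeneity

variable {n : ℕ} {O : Set (Fin n → ℝ)} {f g : (Fin n → ℝ) → ℝ} {y : Fin n → ℝ} {α : ℝ}

lemma PosHom.euler (hf : PosHom α O f) (hy : y ∈ O)
    (hd : DifferentiableAt ℝ f y) : ∑ a, y a * pd f a y = α * f y := by
  have hline : HasDerivAt (fun t : ℝ => 0 + t • y) y 1 := by
    simpa using ((hasDerivAt_id (1 : ℝ)).smul_const y).const_add 0
  have hd' : DifferentiableAt ℝ f (0 + (1 : ℝ) • y) := by simpa using hd
  have hray := hasDerivAt_comp_add_smul hd'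
  simp only [zero_add, one_smul] at hray
  have hpow : HasDerivAt (fun t : ℝ => t ^ α * f y) (α * f y) 1 := by
    simpa using (Real.hasDerivAt_rpow_const (p := α) (Or.inl one_ne_zero)).mul_const (f y)
  refine hray.unique (hpow.congr_of_eventuallyEq ?_)
  filter_upwards [lt_mem_nhds one_pos] with t ht
  exact hf y hy t ht

lemma pd_comp_smul {t : ℝ} (hd : DifferentiableAt ℝ f (t • y)) (i : Fin n) :
    pd (fun z => f (t • z)) i y = t * pd f i (t • y) := by
  have hlin : HasFDerivAt (fun z : Fin n → ℝ => t • z) (t • ContinuousLinearMap.id ℝ _) y :=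
    (t • ContinuousLinearMap.id ℝ (Fin n → ℝ)).hasFDerivAt
  rw [pd, show (fun z => f (t • z)) = f ∘ fun z => t • z from rfl,
    (hd.hasFDerivAt.comp y hlin).fderiv]
  simp [pd]

lemma PosHom.pd_of_differentiableOn (hf : PosHom α O f) (hO : IsOpen O) (hc : Conic O)
    (hd : DifferentiableOn ℝ f O) (i : Fin n) : PosHom (α - 1) O (pd f i) := by
  intro y hy t ht
  have hscale : (fun z => f (t • z)) =ᶠ[𝓝 y] fun z => t ^ α * f z :=
    eventually_of_mem (hO.mem_nhds hy) fun z hz => hf z hz t ht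
  have key : t * pd f i (t • y) = t ^ α * pd f i y := by
    rw [← pd_comp_smul ((hd _ (hc hy ht)).differentiableAt (hO.mem_nhds (hc hy ht))),
      ← pd_const_mul _ ((hd y hy).differentiableAt (hO.mem_nhds hy)), (hscale.pd i).eq_of_nhds]
  rw [Real.rpow_sub_one ht.ne', div_mul_eq_mul_div, eq_div_iff ht.ne', ← key]
  ring

lemma PosHom.div (hf : PosHom α O f) (hg : PosHom α O g) : PosHom 0 O (fun y => f y / g y) := by
  intro y hy t ht
  simp only [hf y hy t ht, hg y hy t ht, Real.rpow_zero, one_mul,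
    mul_div_mul_left _ _ (Real.rpow_pos_of_pos ht α).ne']

lemma PosHom.mono {s : Set (Fin n → ℝ)} (hf : PosHom α O f) (hs : s ⊆ O) : PosHom α s f :=
  fun y hy => hf y (hs hy)

lemma Conic.inv_norm_smul_mem (hc : Conic O) (hy : y ∈ O) (hy0 : y ≠ 0) :
    ‖y‖⁻¹ • y ∈ O ∩ Metric.sphere 0 1 := by
  refine ⟨hc hy (inv_pos.2 (norm_pos_iff.2 hy0)), ?_⟩
  rw [mem_sphere_zero_iff_norm, norm_smul, norm_inv, norm_norm,
    inv_mul_cancel₀ (norm_pos_iff.2 hy0).ne']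

lemma PosHom.le_of_le_on_sphere (hf : PosHom α O f) (hg : PosHom α O g) (hc : Conic O)
    (h0 : ∀ y ∈ O, y ≠ 0) (hS : ∀ y ∈ O ∩ Metric.sphere 0 1, f y ≤ g y) :
    ∀ y ∈ O, f y ≤ g y := by
  intro y hy
  have hnorm : 0 < ‖y‖⁻¹ := inv_pos.2 (norm_pos_iff.2 (h0 y hy))
  have := hS _ (hc.inv_norm_smul_mem hy (h0 y hy))
  rw [hf y hy _ hnorm, hg y hy _ hnorm] at this
  exact le_of_mul_le_mul_left this (Real.rpow_pos_of_pos hnorm α)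

end Homogeneity

section Hessian

variable {n : ℕ} {O : Set (Fin n → ℝ)} {f g : (Fin n → ℝ) → ℝ} {y : Fin n → ℝ}

def hessian (f : (Fin n → ℝ) → ℝ) (y : Fin n → ℝ) : Matrix (Fin n) (Fin n) ℝ :=
  Matrix.of fun a b => pd (pd f a) b y

lemma Filter.EventuallyEq.hessian_eq (h : f =ᶠ[𝓝 y] g) : hessian f y = hessian g y := by
  ext a b
  exact ((h.pd a).pd b).eq_of_nhds

lemma IsLocalMax.deriv_deriv_nonpos {φ : ℝ → ℝ} {s : ℝ} (hmax : IsLocalMax φ s)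
    (hc : ContinuousAt φ s) : deriv (deriv φ) s ≤ 0 := by
  by_contra! hpos
  have hmin := isLocalMin_of_deriv_deriv_pos hpos hmax.deriv_eq_zero hc
  have hconst : φ =ᶠ[𝓝 s] fun _ => φ s :=
    (hmax.and hmin).mono fun _ h => le_antisymm h.1 h.2
  have hzero : deriv (deriv φ) s = 0 := by
    rw [hconst.deriv.deriv_eq]
    simp
  exact hpos.ne' hzero

lemma ContDiffOn.differentiableAt_pd (hf : ContDiffOn ℝ 2 f O) (hO : IsOpen O) (hy : y ∈ O)
    (a : Fin n) : DifferentiableAt ℝ (pd f a) y :=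
  ((hf.pd_of_isOpen hO (k := 1) (by norm_num) a).differentiableOn one_ne_zero).differentiableAt
    (hO.mem_nhds hy)

lemma ContDiffOn.deriv_deriv_comp_add_smul (hf : ContDiffOn ℝ 2 f O) (hO : IsOpen O)
    (hy : y ∈ O) (v : Fin n → ℝ) :
    deriv (deriv fun s : ℝ => f (y + s • v)) 0 = v ⬝ᵥ (hessian f y *ᵥ v) := by
  have hline : ∀ᶠ s in 𝓝 (0 : ℝ), y + s • v ∈ O :=
    (by fun_prop : Continuous fun s : ℝ => y + s • v).continuousAt.preimage_mem_nhds
      (by simpa using hO.mem_nhds hy)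
  have hderiv : deriv (fun s : ℝ => f (y + s • v)) =ᶠ[𝓝 0]
      fun s => ∑ a, v a * pd f a (y + s • v) := by
    filter_upwards [hline] with s hs
    exact (hasDerivAt_comp_add_smul
      ((hf.differentiableOn (by norm_num)).differentiableAt (hO.mem_nhds hs))).deriv
  have hy' : y + (0 : ℝ) • v = y := by simp
  have hsecond : HasDerivAt (fun s : ℝ => ∑ a, v a * pd f a (y + s • v))
      (∑ a, v a * ∑ b, v b * pd (pd f a) b y) 0 := by
    refine HasDerivAt.fun_sum fun a _ => HasDerivAt.const_mul (v a) ?_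
    have := hasDerivAt_comp_add_smul (s := 0) (v := v)
      (by rw [hy']; exact hf.differentiableAt_pd hO hy a)
    rwa [hy'] at this
  rw [hderiv.deriv_eq, hsecond.deriv]
  simp only [hessian, dotProduct, mulVec, of_apply, Finset.mul_sum]
  exact Finset.sum_congr rfl fun a _ => Finset.sum_congr rfl fun b _ => by ring

lemma IsLocalMax.dotProduct_hessian_mulVec_nonpos (hmax : IsLocalMax f y)
    (hf : ContDiffOn ℝ 2 f O) (hO : IsOpen O) (hy : y ∈ O) (v : Fin n → ℝ) :
    v ⬝ᵥ (hessian f y *ᵥ v) ≤ 0 := by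
  set line := fun s : ℝ => y + s • v
  have hcont : ContinuousAt line 0 := by fun_prop
  have hmax' : IsLocalMax f (line 0) := by simpa [line] using hmax
  have hfy : ContinuousAt f (line 0) :=
    hf.continuousOn.continuousAt (by simpa [line] using hO.mem_nhds hy)
  rw [← hf.deriv_deriv_comp_add_smul hO hy v]
  exact (hmax'.comp_continuous hcont).deriv_deriv_nonpos (hfy.comp hcont)

lemma PosHom.hessian_mulVec_self {α : ℝ} (hfh : PosHom α O f) (hf : ContDiffOn ℝ 2 f O)
    (hO : IsOpen O) (hc : Conic O) (hy : y ∈ O) :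
    hessian f y *ᵥ y = (α - 1) • fun a => pd f a y := by
  ext a
  have := (hfh.pd_of_differentiableOn hO hc (hf.differentiableOn (by norm_num)) a).euler hy
    (hf.differentiableAt_pd hO hy a)
  simp only [mulVec, dotProduct, hessian, of_apply, Pi.smul_apply, smul_eq_mul, ← this]
  exact Finset.sum_congr rfl fun b _ => mul_comm _ _

lemma hessian_mul_of_pd_eq_zero (hf : ContDiffOn ℝ 2 f O) (hg : ContDiffOn ℝ 2 g O)
    (hO : IsOpen O) (hy : y ∈ O) (hcrit : ∀ a, pd f a y = 0) :
    hessian (fun z => f z * g z) y = g y • hessian f y + f y • hessian g y := by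
  have hdf := hf.differentiableOn (by norm_num)
  have hdg := hg.differentiableOn (by norm_num)
  ext a b
  have hprod : pd (fun z => f z * g z) a =ᶠ[𝓝 y]
      fun z => pd f a z * g z + f z * pd g a z := by
    filter_upwards [hO.mem_nhds hy] with z hz
    exact pd_mul (hdf.differentiableAt (hO.mem_nhds hz)) (hdg.differentiableAt (hO.mem_nhds hz)) a
  have hfa := hf.differentiableAt_pd hO hy a
  have hga := hg.differentiableAt_pd hO hy a
  have hfy := hdf.differentiableAt (hO.mem_nhds hy)
  have hgy := hdg.differentiableAt (hO.mem_nhds hy)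
  simp only [hessian, of_apply, Matrix.add_apply, Matrix.smul_apply, smul_eq_mul]
  rw [(hprod.pd b).eq_of_nhds, pd_add (hfa.fun_mul hgy) (hfy.fun_mul hga), pd_mul hfa hgy,
    pd_mul hfy hga, hcrit a, hcrit b]
  ring

lemma hessian_add_const_mul (hf : ContDiffOn ℝ 2 f O) (hg : ContDiffOn ℝ 2 g O)
    (hO : IsOpen O) (hy : y ∈ O) (c : ℝ) :
    hessian (fun z => f z + c * g z) y = hessian f y + c • hessian g y := by
  have hdf := hf.differentiableOn (by norm_num)
  have hdg := hg.differentiableOn (by norm_num)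
  ext a b
  have hsum : pd (fun z => f z + c * g z) a =ᶠ[𝓝 y] fun z => pd f a z + c * pd g a z := by
    filter_upwards [hO.mem_nhds hy] with z hz
    have hgz := hdg.differentiableAt (hO.mem_nhds hz)
    rw [pd_add (hdf.differentiableAt (hO.mem_nhds hz)) (hgz.const_mul c), pd_const_mul c hgz]
  have hga := hg.differentiableAt_pd hO hy a
  simp only [hessian, of_apply, Matrix.add_apply, Matrix.smul_apply, smul_eq_mul]
  rw [(hsum.pd b).eq_of_nhds, pd_add (hf.differentiableAt_pd hO hy a) (hga.const_mul c),
    pd_const_mul c hga]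

end Hessian

section Lorentz

variable {n : ℕ}

def minkowskiMatrix (n : ℕ) : Matrix (Fin n) (Fin n) ℝ :=
  diagonal fun i => if (i : ℕ) = 0 then 1 else -1

lemma dotProduct_minkowskiMatrix_mulVec (u v : Fin (n + 1) → ℝ) :
    u ⬝ᵥ (minkowskiMatrix (n + 1) *ᵥ v) = u 0 * v 0 - ∑ i : Fin n, u i.succ * v i.succ := by
  simp [minkowskiMatrix, dotProduct, mulVec_diagonal, Fin.sum_univ_succ, Fin.succ_ne_zero,
    Finset.sum_neg_distrib, sub_eq_add_neg]

lemma minkowskiMatrix_reverse_cauchy_schwarz {p q : Fin n → ℝ}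
    (hq : 0 < q ⬝ᵥ (minkowskiMatrix n *ᵥ q)) :
    (q ⬝ᵥ (minkowskiMatrix n *ᵥ q)) * (p ⬝ᵥ (minkowskiMatrix n *ᵥ p))
      ≤ (p ⬝ᵥ (minkowskiMatrix n *ᵥ q)) ^ 2 := by
  cases n with
  | zero => simp at hq
  | succ n =>
    simp only [dotProduct_minkowskiMatrix_mulVec] at hq ⊢
    set S := ∑ i : Fin n, q i.succ * q i.succ
    set T := ∑ i : Fin n, p i.succ * p i.succ
    set s := ∑ i : Fin n, p i.succ * q i.succ
    have hS : 0 ≤ S := Finset.sum_nonneg fun i _ => mul_self_nonneg _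
    have hT : 0 ≤ T := Finset.sum_nonneg fun i _ => mul_self_nonneg _
    have hcs : s ^ 2 ≤ T * S := by
      simpa only [sq] using Finset.sum_mul_sq_le_sq_mul_sq Finset.univ
        (fun i : Fin n => p i.succ) (fun i => q i.succ)
    -- `S * (rhs - lhs) = (S p₀ - q₀ s)² + (q₀² - S) (S T - s²)`
    rcases hS.eq_or_lt with hS0 | hSpos
    · have hs : s = 0 := by nlinarith [sq_nonneg s]
      rw [← hS0, hs]
      nlinarith [mul_nonneg (sq_nonneg (q 0)) hT]
    · nlinarith [sq_nonneg (S * p 0 - q 0 * s), mul_nonneg (by nlinarith : 0 ≤ q 0 * q 0 - S)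
        (by nlinarith : 0 ≤ T * S - s ^ 2)]

lemma LorentzSignature.exists_eq {g : Matrix (Fin n) (Fin n) ℝ} (hg : LorentzSignature g) :
    ∃ Q : Matrix (Fin n) (Fin n) ℝ, IsUnit Q.det ∧ g = Qᵀ * minkowskiMatrix n * Q := by
  obtain ⟨P, hP, hPg⟩ := hg
  refine ⟨P⁻¹, isUnit_nonsing_inv_det_iff.2 hP, ?_⟩
  have hPT : IsUnit Pᵀ.det := by rwa [det_transpose]
  rw [minkowskiMatrix, ← hPg, transpose_nonsing_inv, mul_assoc Pᵀ g P,
    nonsing_inv_mul_cancel_left _ _ hPT, mul_nonsing_inv_cancel_right _ _ hP]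

lemma LorentzSignature.transpose_eq {g : Matrix (Fin n) (Fin n) ℝ} (hg : LorentzSignature g) :
    gᵀ = g := by
  obtain ⟨Q, -, rfl⟩ := hg.exists_eq
  simp [transpose_mul, minkowskiMatrix, mul_assoc]

lemma LorentzSignature.isUnit_det {g : Matrix (Fin n) (Fin n) ℝ} (hg : LorentzSignature g) :
    IsUnit g.det := by
  obtain ⟨Q, hQ, rfl⟩ := hg.exists_eq
  have hη : IsUnit (minkowskiMatrix n).det := by
    rw [minkowskiMatrix, det_diagonal, isUnit_iff_ne_zero, Finset.prod_ne_zero_iff]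
    intro i _
    split_ifs <;> norm_num
  simpa [det_mul, det_transpose] using (hQ.mul hη).mul hQ

lemma LorentzSignature.reverse_cauchy_schwarz {g : Matrix (Fin n) (Fin n) ℝ}
    (hg : LorentzSignature g) {y : Fin n → ℝ} (hy : 0 < y ⬝ᵥ (g *ᵥ y)) (u : Fin n → ℝ) :
    (y ⬝ᵥ (g *ᵥ y)) * (u ⬝ᵥ (g *ᵥ u)) ≤ (u ⬝ᵥ (g *ᵥ y)) ^ 2 := by
  obtain ⟨Q, -, rfl⟩ := hg.exists_eq
  have hform : ∀ v w : Fin n → ℝ, v ⬝ᵥ ((Qᵀ * minkowskiMatrix n * Q) *ᵥ w)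
      = (Q *ᵥ v) ⬝ᵥ (minkowskiMatrix n *ᵥ (Q *ᵥ w)) := by
    intro v w
    rw [← mulVec_mulVec, ← mulVec_mulVec, dotProduct_mulVec, vecMul_transpose]
  simp only [hform] at hy ⊢
  exact minkowskiMatrix_reverse_cauchy_schwarz hy

lemma Matrix.PosSemidef.sum_mul_nonpos {M W : Matrix (Fin n) (Fin n) ℝ} (hM : M.PosSemidef)
    (hW : ∀ v, v ⬝ᵥ (W *ᵥ v) ≤ 0) : ∑ a, ∑ b, M a b * W a b ≤ 0 := by
  open scoped MatrixOrder in
  obtain ⟨S, hSsymm, hSS⟩ : ∃ S : Matrix (Fin n) (Fin n) ℝ, Sᵀ = S ∧ S * S = M :=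
    ⟨CFC.sqrt M, (CFC.sqrt_nonneg M).posSemidef.isHermitian,
      CFC.sqrt_mul_sqrt_self M hM.nonneg⟩
  have hS : ∀ i j, S i j = S j i := fun i j => by rw [← transpose_apply S j i, hSsymm]
  have hrows : ∑ a, ∑ b, M a b * W a b = ∑ m, S m ⬝ᵥ (W *ᵥ S m) := by
    calc ∑ a, ∑ b, M a b * W a b = ∑ a, ∑ b, ∑ m, S m a * (W a b * S m b) := by
          simp only [← hSS, mul_apply, Finset.sum_mul]
          refine Finset.sum_congr rfl fun a _ => Finset.sum_congr rfl fun b _ =>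
            Finset.sum_congr rfl fun m _ => ?_
          rw [hS a m]
          ring
      _ = ∑ m, S m ⬝ᵥ (W *ᵥ S m) := by
          simp only [dotProduct, mulVec, Finset.mul_sum]
          exact (Finset.sum_congr rfl fun a _ => Finset.sum_comm).trans Finset.sum_comm
  rw [hrows]
  exact Finset.sum_nonpos fun m _ => hW _

lemma LorentzSignature.posSemidef_smul_vecMulVec_sub_inv {g : Matrix (Fin n) (Fin n) ℝ}
    (hg : LorentzSignature g) {y : Fin n → ℝ}
    (hy : 0 < y ⬝ᵥ (g *ᵥ y)) :
    ((y ⬝ᵥ (g *ᵥ y))⁻¹ • vecMulVec y y - g⁻¹).PosSemidef := by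
  have hsym := hg.transpose_eq
  have hdet := hg.isUnit_det
  refine .of_dotProduct_mulVec_nonneg ?_ fun x => ?_
  · rw [IsHermitian, conjTranspose_eq_transpose_of_trivial, transpose_sub, transpose_smul,
      transpose_vecMulVec, transpose_nonsing_inv, hsym]
  -- for `x = g u` the claim is the reverse Cauchy–Schwarz inequality for `u` and `y`
  obtain ⟨u, rfl⟩ : ∃ u, g *ᵥ u = x :=
    ⟨g⁻¹ *ᵥ x, by rw [mulVec_mulVec, mul_nonsing_inv _ hdet, one_mulVec]⟩
  have hux : (g *ᵥ u) ⬝ᵥ y = u ⬝ᵥ (g *ᵥ y) := by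
    rw [← vecMul_transpose, hsym, ← dotProduct_mulVec]
  have hinv : (g *ᵥ u) ⬝ᵥ (g⁻¹ *ᵥ (g *ᵥ u)) = u ⬝ᵥ (g *ᵥ u) := by
    rw [mulVec_mulVec, nonsing_inv_mul _ hdet, one_mulVec, dotProduct_comm]
  have hquad : (g *ᵥ u) ⬝ᵥ (vecMulVec y y *ᵥ (g *ᵥ u)) = (u ⬝ᵥ (g *ᵥ y)) ^ 2 := by
    rw [vecMulVec_mulVec, op_smul_eq_smul, dotProduct_smul, dotProduct_comm y, hux, smul_eq_mul, sq]
  rw [star_trivial, sub_mulVec, dotProduct_sub, smul_mulVec, dotProduct_smul, hquad, hinv,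
    smul_eq_mul, sub_nonneg, le_inv_mul_iff₀ hy]
  exact hg.reverse_cauchy_schwarz hy u

lemma sum_inv_mul_self {g : Matrix (Fin n) (Fin n) ℝ} (hsym : gᵀ = g) (hdet : IsUnit g.det) :
    ∑ a, ∑ b, g⁻¹ a b * g a b = n := by
  have htrace : ∑ a, ∑ b, g⁻¹ a b * g a b = (g⁻¹ * g).trace := by
    simp only [trace, diag, mul_apply]
    refine Finset.sum_congr rfl fun a _ => Finset.sum_congr rfl fun b _ => ?_
    rw [← transpose_apply g b a, hsym]
  rw [htrace, nonsing_inv_mul _ hdet, trace_one, Fintype.card_fin]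

lemma LorentzSignature.sum_inv_mul_nonneg {g W : Matrix (Fin n) (Fin n) ℝ}
    (hg : LorentzSignature g) {y : Fin n → ℝ} (hy : 0 < y ⬝ᵥ (g *ᵥ y))
    (hW : ∀ v, v ⬝ᵥ (W *ᵥ v) ≤ 0) (hWy : y ⬝ᵥ (W *ᵥ y) = 0) :
    0 ≤ ∑ a, ∑ b, g⁻¹ a b * W a b := by
  set M := (y ⬝ᵥ (g *ᵥ y))⁻¹ • vecMulVec y y - g⁻¹
  have hM : ∑ a, ∑ b, M a b * W a b ≤ 0 :=
    (hg.posSemidef_smul_vecMulVec_sub_inv hy).sum_mul_nonpos hW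
  have hsplit : ∑ a, ∑ b, g⁻¹ a b * W a b
      = (y ⬝ᵥ (g *ᵥ y))⁻¹ * (y ⬝ᵥ (W *ᵥ y)) - ∑ a, ∑ b, M a b * W a b := by
    rw [show g⁻¹ = (y ⬝ᵥ (g *ᵥ y))⁻¹ • vecMulVec y y - M by simp only [M, sub_sub_cancel]]
    simp only [Matrix.sub_apply, Matrix.smul_apply, vecMulVec_apply, smul_eq_mul, sub_mul,
      Finset.sum_sub_distrib, dotProduct, mulVec, Finset.mul_sum]
    congr 1
    exact Finset.sum_congr rfl fun a _ => Finset.sum_congr rfl fun b _ => by ring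
  rw [hsplit, hWy, mul_zero, zero_sub]
  exact neg_nonneg.2 hM

end Lorentz

section MaximumPrinciple

variable {n : ℕ} {O : Set (Fin n → ℝ)} {f ψ : (Fin n → ℝ) → ℝ} {α : ℝ} {y : Fin n → ℝ}

theorem sum_inv_mul_hessian_ge_of_isLocalMax_div (hO : IsOpen O) (hc : Conic O)
    (hf : ContDiffOn ℝ 2 f O) (hψ : ContDiffOn ℝ 2 ψ O) (hfh : PosHom α O f)
    (hψh : PosHom α O ψ) (hψpos : ∀ z ∈ O, 0 < ψ z) (hy : y ∈ O)
    (hmax : IsLocalMax (fun z => f z / ψ z) y) {g : Matrix (Fin n) (Fin n) ℝ}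
    (hg : LorentzSignature g) (hgy : 0 < y ⬝ᵥ (g *ᵥ y)) :
    f y / ψ y * ∑ a, ∑ b, g⁻¹ a b * hessian ψ y a b
      ≤ ∑ a, ∑ b, g⁻¹ a b * hessian f y a b := by
  set w := fun z => f z / ψ z
  have hw : ContDiffOn ℝ 2 w O := hf.div hψ fun z hz => (hψpos z hz).ne'
  have hcrit : ∀ a, pd w a y = 0 := fun a => by simp [pd, hmax.fderiv_eq_zero]
  have hwh : PosHom 0 O w := hfh.div hψh
  have hWy : y ⬝ᵥ (hessian w y *ᵥ y) = 0 := by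
    rw [hwh.hessian_mulVec_self hw hO hc hy]
    simp [hcrit]
  have htrace := hg.sum_inv_mul_nonneg hgy (hmax.dotProduct_hessian_mulVec_nonpos hw hO hy) hWy
  have hfactor : f =ᶠ[𝓝 y] fun z => w z * ψ z := by
    filter_upwards [hO.mem_nhds hy] with z hz
    exact (div_mul_cancel₀ _ (hψpos z hz).ne').symm
  rw [hfactor.hessian_eq, hessian_mul_of_pd_eq_zero hw hψ hO hy hcrit]
  simp only [Matrix.add_apply, Matrix.smul_apply, smul_eq_mul, mul_add, Finset.sum_add_distrib]
  have hsplit : ∑ a, ∑ b, g⁻¹ a b * (ψ y * hessian w y a b)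
      = ψ y * ∑ a, ∑ b, g⁻¹ a b * hessian w y a b := by
    simp only [Finset.mul_sum]
    exact Finset.sum_congr rfl fun a _ => Finset.sum_congr rfl fun b _ => by ring
  have hsplit' : ∑ a, ∑ b, g⁻¹ a b * (w y * hessian ψ y a b)
      = w y * ∑ a, ∑ b, g⁻¹ a b * hessian ψ y a b := by
    simp only [Finset.mul_sum]
    exact Finset.sum_congr rfl fun a _ => Finset.sum_congr rfl fun b _ => by ring
  rw [hsplit, hsplit']
  nlinarith [mul_nonneg (hψpos y hy).le htrace]

end MaximumPrinciple

def vertLaplacian {n : ℕ} (L f : (Fin n → ℝ) → ℝ) (y : Fin n → ℝ) : ℝ :=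
  ∑ a, ∑ b, ginv L y a b * hessian f y a b

section FundamentalTensor

variable {n : ℕ} {O : Set (Fin n → ℝ)} {L f : (Fin n → ℝ) → ℝ} {y : Fin n → ℝ}

lemma hessian_eq_two_smul_gmet (L : (Fin n → ℝ) → ℝ) (y : Fin n → ℝ) :
    hessian L y = (2 : ℝ) • gmet L y := by
  ext a b
  simp [hessian, gmet]

lemma PosHom.dotProduct_gmet_mulVec_self (hLh : PosHom 2 O L) (hL : ContDiffOn ℝ 2 L O)
    (hO : IsOpen O) (hc : Conic O) (hy : y ∈ O) : y ⬝ᵥ (gmet L y *ᵥ y) = L y := by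
  have hgrad := hLh.hessian_mulVec_self hL hO hc hy
  rw [hessian_eq_two_smul_gmet, smul_mulVec] at hgrad
  have hgy : gmet L y *ᵥ y = (1 / 2 : ℝ) • fun a => pd L a y := by
    rw [← inv_smul_smul₀ (two_ne_zero' ℝ) (gmet L y *ᵥ y), hgrad]
    norm_num
  rw [hgy, dotProduct_smul, smul_eq_mul]
  simp only [dotProduct]
  rw [hLh.euler hy ((hL.differentiableOn (by norm_num)).differentiableAt (hO.mem_nhds hy))]
  ring

lemma vertLaplacian_neg (L f : (Fin n → ℝ) → ℝ) (y : Fin n → ℝ) :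
    vertLaplacian L (fun z => -f z) y = -vertLaplacian L f y := by
  have hpd : ∀ (h : (Fin n → ℝ) → ℝ) a, pd (fun z => -h z) a = fun z => -pd h a z := by
    intro h a
    ext z
    simp [pd]
  simp [vertLaplacian, hessian, hpd, Finset.sum_neg_distrib]

lemma vertLaplacian_add_const_mul {q : (Fin n → ℝ) → ℝ} (hL : ContDiffOn ℝ 2 L O)
    (hq : ContDiffOn ℝ 2 q O) (hO : IsOpen O) (hy : y ∈ O) (hg : LorentzSignature (gmet L y))
    (c : ℝ) : vertLaplacian L (fun z => L z + c * q z) y = 2 * n + c * vertLaplacian L q y := by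
  simp only [vertLaplacian, hessian_add_const_mul hL hq hO hy, hessian_eq_two_smul_gmet,
    Matrix.add_apply, Matrix.smul_apply, smul_eq_mul, mul_add, Finset.sum_add_distrib,
    Finset.mul_sum]
  rw [← sum_inv_mul_self hg.transpose_eq hg.isUnit_det]
  simp only [ginv, Finset.mul_sum]
  congr 1 <;> exact Finset.sum_congr rfl fun a _ => Finset.sum_congr rfl fun b _ => by ring

lemma continuousOn_vertLaplacian {U V : Set (Fin n → ℝ)} (hL : ContDiffOn ℝ 2 L U)
    (hU : IsOpen U) (hdet : ∀ y ∈ U, IsUnit (gmet L y).det) (hf : ContDiffOn ℝ 2 f V)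
    (hV : IsOpen V) : ContinuousOn (vertLaplacian L f) (U ∩ V) := by
  have hhess : ∀ {h : (Fin n → ℝ) → ℝ} {W : Set (Fin n → ℝ)}, ContDiffOn ℝ 2 h W → IsOpen W →
      ∀ a b, ContinuousOn (fun y => hessian h y a b) W := fun hh hW a b =>
    ((hh.pd_of_isOpen hW (k := 1) (by norm_num) a).pd_of_isOpen hW (k := 0) (by norm_num)
      b).continuousOn
  have hgmet : ContinuousOn (gmet L) U := by
    refine continuousOn_pi.2 fun a => continuousOn_pi.2 fun b => ?_
    exact continuousOn_const.mul (hhess hL hU a b)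
  have hginv : ContinuousOn (ginv L) U := fun y hy =>
    (continuousAt_matrix_inv _ (by
      rw [Ring.inverse_eq_inv']
      exact continuousAt_inv₀ (hdet y hy).ne_zero)).comp_continuousWithinAt (hgmet y hy)
  refine continuousOn_finsetSum _ fun a _ => continuousOn_finsetSum _ fun b _ => ?_
  exact ((continuousOn_pi.1 (continuousOn_pi.1 hginv a) b).mono inter_subset_left).mul
    ((hhess hf hV a b).mono inter_subset_right)

end FundamentalTensor

lemma div_add_mul_sq_le {l ε M d p : ℝ} (hl : 0 ≤ l) (hlM : l ≤ ε * M) (hε : 0 < ε)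
    (hd : 0 < d) (hdp : d ≤ p) : l / (l + ε * p ^ 2) ≤ M / (M + d ^ 2) := by
  have hM : 0 ≤ M := nonneg_of_mul_nonneg_right (hl.trans hlM) hε
  have hp : 0 < p := hd.trans_le hdp
  rw [div_le_div_iff₀ (by positivity) (by positivity)]
  nlinarith [mul_le_mul_of_nonneg_left hlM (sq_nonneg d),
    mul_le_mul_of_nonneg_left (pow_le_pow_left₀ hd.le hdp 2) (mul_nonneg hε.le hM)]

structure IsSolution {n : ℕ} (C V : Set (Fin n → ℝ)) (L : (Fin n → ℝ) → ℝ) (κ : ℝ)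
    (f : (Fin n → ℝ) → ℝ) : Prop where
  isOpen : IsOpen V
  clos_subset : clos C ⊆ V
  contDiffOn : ContDiffOn ℝ 2 f V
  posHom : PosHom 2 V f
  eq : ∀ y ∈ C, κ * f y = L y * vertLaplacian L f y

lemma IsSolution.neg {n : ℕ} {C V : Set (Fin n → ℝ)} {L f : (Fin n → ℝ) → ℝ} {κ : ℝ}
    (hf : IsSolution C V L κ f) : IsSolution C V L κ (fun z => -f z) where
  isOpen := hf.isOpen
  clos_subset := hf.clos_subset
  contDiffOn := hf.contDiffOn.neg
  posHom y hy t ht := by simp only [hf.posHom y hy t ht, mul_neg]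
  eq y hy := by rw [vertLaplacian_neg, mul_neg, mul_neg, hf.eq y hy]

lemma closure_inter_sphere_subset_clos {n : ℕ} (C : Set (Fin n → ℝ)) :
    closure C ∩ Metric.sphere 0 1 ⊆ clos C :=
  fun y hy => ⟨hy.1, fun h => by simp [show y = 0 from h] at hy⟩

lemma isCompact_closure_inter_sphere {n : ℕ} (C : Set (Fin n → ℝ)) :
    IsCompact (closure C ∩ Metric.sphere 0 1) :=
  (isCompact_sphere 0 1).inter_left isClosed_closure

namespace LorentzDatum

variable {n : ℕ} {C U V : Set (Fin n → ℝ)} {L f : (Fin n → ℝ) → ℝ} {κ : ℝ}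

lemma subset_clos (hD : LorentzDatum n C U L) : C ⊆ clos C :=
  fun y hy => ⟨subset_closure hy, hD.nzC y hy⟩

lemma contDiffOn_two (hD : LorentzDatum n C U L) : ContDiffOn ℝ 2 L U :=
  hD.smoothL.of_le (WithTop.coe_le_coe.2 le_top)

lemma nonempty_closure_inter_sphere (hD : LorentzDatum n C U L) :
    (closure C ∩ Metric.sphere 0 1).Nonempty := by
  obtain ⟨y, hy⟩ := hD.connC.nonempty
  obtain ⟨hyC, hyS⟩ := hD.conicC.inv_norm_smul_mem hy (hD.nzC y hy)
  exact ⟨_, subset_closure hyC, hyS⟩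

lemma eq_mul_vertLaplacian_of_mem_clos (hD : LorentzDatum n C U L)
    (hf : IsSolution C V L κ f) {y : Fin n → ℝ} (hy : y ∈ clos C) :
    κ * f y = L y * vertLaplacian L f y := by
  set F := fun z => κ * f z - L z * vertLaplacian L f z
  have hF : ContinuousOn F (U ∩ V) :=
    (continuousOn_const.mul (hf.contDiffOn.continuousOn.mono inter_subset_right)).sub
      ((hD.contDiffOn_two.continuousOn.mono inter_subset_left).mul
        (continuousOn_vertLaplacian hD.contDiffOn_two hD.openU hD.gInvU hf.contDiffOn hf.isOpen))
  have hFy : F y ∈ closure (F '' C) :=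
    ((hF.continuousAt ((hD.openU.inter hf.isOpen).mem_nhds
      ⟨hD.closSub hy, hf.clos_subset hy⟩)).continuousWithinAt).mem_closure_image hy.1
  have himage : F '' C ⊆ {0} := by
    rintro _ ⟨z, hz, rfl⟩
    exact sub_eq_zero.2 (hf.eq z hz)
  have := closure_mono himage hFy
  rw [closure_singleton, mem_singleton_iff] at this
  exact sub_eq_zero.1 this

lemma eq_zero_of_mem_clos_of_notMem (hD : LorentzDatum n C U L) (hf : IsSolution C V L κ f)
    (hκ0 : κ ≠ 0) {y : Fin n → ℝ} (hy : y ∈ clos C) (hyC : y ∉ C) : f y = 0 := by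
  have := hD.eq_mul_vertLaplacian_of_mem_clos hf hy
  rw [hD.zeroBd y ⟨hy, hyC⟩, zero_mul] at this
  exact (mul_eq_zero.1 this).resolve_left hκ0

lemma exists_le_mul (hD : LorentzDatum n C U L) (hf : IsSolution C V L κ f) (hκ0 : κ ≠ 0) :
    ∃ K, 0 ≤ K ∧ ∀ y ∈ C, f y ≤ K * L y := by
  have hsub : closure C ∩ Metric.sphere 0 1 ⊆ U ∩ V := fun y hy =>
    ⟨hD.closSub (closure_inter_sphere_subset_clos C hy),
      hf.clos_subset (closure_inter_sphere_subset_clos C hy)⟩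
  obtain ⟨B, hB⟩ := (isCompact_closure_inter_sphere C).exists_bound_of_continuousOn
    ((continuousOn_vertLaplacian hD.contDiffOn_two hD.openU hD.gInvU hf.contDiffOn
      hf.isOpen).mono hsub)
  refine ⟨max (B / |κ|) 0, le_max_right _ _, ?_⟩
  refine (hf.posHom.mono (hD.subset_clos.trans hf.clos_subset)).le_of_le_on_sphere
    (fun y hy t ht => by rw [hD.homL y (hD.closSub (hD.subset_clos hy)) t ht]; ring)
    hD.conicC hD.nzC fun y hy => ?_
  have hLy := (hD.posC y hy.1).le
  have hfy : f y = L y * vertLaplacian L f y / κ := by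
    rw [← hf.eq y hy.1, mul_div_cancel_left₀ _ hκ0]
  calc f y ≤ |f y| := le_abs_self _
    _ = L y * |vertLaplacian L f y| / |κ| := by rw [hfy, abs_div, abs_mul, abs_of_nonneg hLy]
    _ ≤ L y * B / |κ| := by
        gcongr
        simpa using hB y ⟨subset_closure hy.1, hy.2⟩
    _ = B / |κ| * L y := by ring
    _ ≤ max (B / |κ|) 0 * L y := mul_le_mul_of_nonneg_right (le_max_left _ _) hLy

lemma sub_mul_le_of_isMaxOn (hD : LorentzDatum n C U L) (hf : IsSolution C V L κ f)
    (φ : (Fin n → ℝ) →ₗ[ℝ] ℝ) {ε : ℝ} (hε : 0 < ε) {y : Fin n → ℝ} (hy : y ∈ C)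
    (hmax : IsMaxOn (fun z => f z / (L z + ε * φ z ^ 2)) C y)
    (hpos : 0 < f y / (L y + ε * φ y ^ 2)) :
    (2 * n - κ) * L y ≤ ε * (κ * φ y ^ 2 - L y * vertLaplacian L (fun z => φ z ^ 2) y) := by
  have hCU : C ⊆ U := hD.subset_clos.trans hD.closSub
  have hCV : C ⊆ V := hD.subset_clos.trans hf.clos_subset
  have hL : ContDiffOn ℝ 2 L C := hD.contDiffOn_two.mono hCU
  have hq : ContDiff ℝ 2 fun z => φ z ^ 2 := (φ.toContinuousLinearMap.contDiff).pow 2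
  have hψh : PosHom 2 C fun z => L z + ε * φ z ^ 2 := fun z hz t ht => by
    simp only [hD.homL z (hCU hz) t ht, map_smul, smul_eq_mul, Real.rpow_two]
    ring
  have hψpos : ∀ z ∈ C, 0 < L z + ε * φ z ^ 2 := fun z hz =>
    add_pos_of_pos_of_nonneg (hD.posC z hz) (by positivity)
  have hg := hD.lorentz y (hD.subset_clos hy)
  have hgy : 0 < y ⬝ᵥ (gmet L y *ᵥ y) := by
    rw [(hD.homL.mono hCU).dotProduct_gmet_mulVec_self hL hD.openC hD.conicC hy]
    exact hD.posC y hy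
  have hmp := sum_inv_mul_hessian_ge_of_isLocalMax_div hD.openC hD.conicC
    (hf.contDiffOn.mono hCV) (hL.add (contDiffOn_const.mul hq.contDiffOn))
    (hf.posHom.mono hCV) hψh hψpos hy (hmax.isLocalMax (hD.openC.mem_nhds hy)) hg hgy
  change _ * vertLaplacian L (fun z => L z + ε * φ z ^ 2) y ≤ vertLaplacian L f y at hmp
  rw [vertLaplacian_add_const_mul hL hq.contDiffOn hD.openC hy hg] at hmp
  set w := f y / (L y + ε * φ y ^ 2)
  have hfw : f y = w * (L y + ε * φ y ^ 2) := (div_mul_cancel₀ _ (hψpos y hy).ne').symm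
  have hmain : w * (L y * (2 * n + ε * vertLaplacian L (fun z => φ z ^ 2) y))
      ≤ w * (κ * (L y + ε * φ y ^ 2)) := by
    have := mul_le_mul_of_nonneg_left hmp (hD.posC y hy).le
    rw [← hf.eq y hy, hfw] at this
    linarith
  nlinarith [le_of_mul_le_mul_left hmain hpos]

lemma exists_isMaxOn_div (hD : LorentzDatum n C U L) (hf : IsSolution C V L κ f)
    {φ : (Fin n → ℝ) →ₗ[ℝ] ℝ} (hφ : ∀ y ∈ clos C, 0 < φ y) {ε : ℝ} (hε : 0 < ε) :
    ∃ y₀ ∈ closure C ∩ Metric.sphere 0 1,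
      IsMaxOn (fun z => f z / (L z + ε * φ z ^ 2)) C y₀ := by
  set S := closure C ∩ Metric.sphere 0 1
  set ψ := fun z => L z + ε * φ z ^ 2
  have hCU : C ⊆ U := hD.subset_clos.trans hD.closSub
  have hSclos : S ⊆ clos C := closure_inter_sphere_subset_clos C
  have hψS : ∀ z ∈ S, ψ z ≠ 0 := by
    intro z hz
    have hL : 0 ≤ L z := by
      by_cases hzC : z ∈ C
      · exact (hD.posC z hzC).le
      · exact (hD.zeroBd z ⟨hSclos hz, hzC⟩).ge
    have := hφ z (hSclos hz)
    positivity
  have hwS : ContinuousOn (fun z => f z / ψ z) S :=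
    (hf.contDiffOn.continuousOn.mono fun z hz => hf.clos_subset (hSclos hz)).div
      ((hD.smoothL.continuousOn.mono fun z hz => hD.closSub (hSclos hz)).add
        (continuousOn_const.mul (φ.continuous_of_finiteDimensional.continuousOn.pow 2))) hψS
  obtain ⟨y₀, hy₀S, hy₀max⟩ :=
    (isCompact_closure_inter_sphere C).exists_isMaxOn hD.nonempty_closure_inter_sphere hwS
  have hψh : PosHom 2 C ψ := fun z hz t ht => by
    simp only [ψ, hD.homL z (hCU hz) t ht, map_smul, smul_eq_mul, Real.rpow_two]
    ring
  -- the ratio is 0-homogeneous, so its maximum on the slice `S` is its maximum on `C`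
  refine ⟨y₀, hy₀S, isMaxOn_iff.2 ?_⟩
  exact ((hf.posHom.mono (hD.subset_clos.trans hf.clos_subset)).div hψh).le_of_le_on_sphere
    (g := fun _ => f y₀ / ψ y₀) (fun _ _ t _ => by simp) hD.conicC hD.nzC
    fun z hz => hy₀max ⟨subset_closure hz.1, hz.2⟩

lemma le_mul_add_of_le_mul (hD : LorentzDatum n C U L) (hf : IsSolution C V L κ f)
    (hκ0 : κ ≠ 0) (hκ : κ < 2 * n) {φ : (Fin n → ℝ) →ₗ[ℝ] ℝ} (hφ : ∀ y ∈ clos C, 0 < φ y)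
    {d M : ℝ} (hd : 0 < d) (hdφ : ∀ y ∈ closure C ∩ Metric.sphere 0 1, d ≤ φ y) (hM0 : 0 ≤ M)
    (hM : ∀ y ∈ closure C ∩ Metric.sphere 0 1,
      κ * φ y ^ 2 - L y * vertLaplacian L (fun z => φ z ^ 2) y ≤ (2 * n - κ) * M)
    {K : ℝ} (hK0 : 0 ≤ K) (hK : ∀ y ∈ C, f y ≤ K * L y) {ε : ℝ} (hε : 0 < ε) :
    ∀ y ∈ C, f y ≤ K * (M / (M + d ^ 2)) * (L y + ε * φ y ^ 2) := by
  set ψ := fun z => L z + ε * φ z ^ 2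
  set w := fun z => f z / ψ z
  have hψC : ∀ z ∈ C, 0 < ψ z := fun z hz =>
    add_pos_of_pos_of_nonneg (hD.posC z hz) (by positivity)
  obtain ⟨y₀, hy₀S, hmax⟩ := hD.exists_isMaxOn_div hf hφ hε
  suffices hw₀ : w y₀ ≤ K * (M / (M + d ^ 2)) by
    intro y hy
    calc f y = w y * ψ y := (div_mul_cancel₀ _ (hψC y hy).ne').symm
      _ ≤ w y₀ * ψ y := mul_le_mul_of_nonneg_right (hmax hy) (hψC y hy).le
      _ ≤ K * (M / (M + d ^ 2)) * ψ y := mul_le_mul_of_nonneg_right hw₀ (hψC y hy).le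
  rcases le_or_gt (w y₀) 0 with hneg | hpos
  · exact hneg.trans (mul_nonneg hK0 (by positivity))
  have hy₀C : y₀ ∈ C := by
    by_contra hy₀C
    simp [w, hD.eq_zero_of_mem_clos_of_notMem hf hκ0
      (closure_inter_sphere_subset_clos C hy₀S) hy₀C] at hpos
  have hLM : L y₀ ≤ ε * M := by
    have h := (hD.sub_mul_le_of_isMaxOn hf φ hε hy₀C hmax hpos).trans
      (mul_le_mul_of_nonneg_left (hM y₀ hy₀S) hε.le)
    rw [mul_left_comm] at h
    exact le_of_mul_le_mul_left h (by linarith)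
  calc w y₀ ≤ K * L y₀ / ψ y₀ := div_le_div_of_nonneg_right (hK y₀ hy₀C) (hψC y₀ hy₀C).le
    _ = K * (L y₀ / ψ y₀) := mul_div_assoc _ _ _
    _ ≤ K * (M / (M + d ^ 2)) := mul_le_mul_of_nonneg_left
        (div_add_mul_sq_le (hD.posC y₀ hy₀C).le hLM hε hd (hdφ y₀ hy₀S)) hK0

lemma exists_contraction (hD : LorentzDatum n C U L) (hf : IsSolution C V L κ f)
    (hκ0 : κ ≠ 0) (hκ : κ < 2 * n) :
    ∃ θ, 0 ≤ θ ∧ θ < 1 ∧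
      ∀ K, 0 ≤ K → (∀ y ∈ C, f y ≤ K * L y) → ∀ y ∈ C, f y ≤ K * θ * L y := by
  obtain ⟨φ, -, hφ⟩ := hD.halfspace
  set S := closure C ∩ Metric.sphere 0 1
  have hSU : S ⊆ U := fun z hz => hD.closSub (closure_inter_sphere_subset_clos C hz)
  obtain ⟨z, hzS, hzmin⟩ := (isCompact_closure_inter_sphere C).exists_isMinOn
    hD.nonempty_closure_inter_sphere φ.continuous_of_finiteDimensional.continuousOn
  have hd : 0 < φ z := hφ z (closure_inter_sphere_subset_clos C hzS)
  have hFc : ContinuousOn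
      (fun y => κ * φ y ^ 2 - L y * vertLaplacian L (fun z => φ z ^ 2) y) S := by
    have hq : ContDiff ℝ 2 fun z => φ z ^ 2 := (φ.toContinuousLinearMap.contDiff).pow 2
    refine ContinuousOn.sub (by fun_prop) (ContinuousOn.mul ?_ ?_)
    · exact hD.smoothL.continuousOn.mono hSU
    · simpa using (continuousOn_vertLaplacian hD.contDiffOn_two hD.openU hD.gInvU
        hq.contDiffOn isOpen_univ).mono fun y hy => ⟨hSU hy, mem_univ y⟩
  obtain ⟨B, hB⟩ := (isCompact_closure_inter_sphere C).bddAbove_image hFc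
  have h2nκ : 0 < 2 * (n : ℝ) - κ := by linarith
  set M := max B 0 / (2 * n - κ)
  have hM0 : 0 ≤ M := by positivity
  refine ⟨M / (M + φ z ^ 2), by positivity,
    (div_lt_one (by positivity)).2 (by simpa using pow_pos hd 2), fun K hK0 hK y hy => ?_⟩
  have hbound := fun ε (hε : 0 < ε) => hD.le_mul_add_of_le_mul hf hκ0 hκ hφ hd
    (fun y hy => isMinOn_iff.1 hzmin y hy) hM0
    (fun y hy => by
      rw [mul_div_cancel₀ _ h2nκ.ne']
      exact (hB (mem_image_of_mem _ hy)).trans (le_max_left _ _)) hK0 hK hε y hy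
  have hlim : Tendsto (fun ε => K * (M / (M + φ z ^ 2)) * (L y + ε * φ y ^ 2)) (𝓝[>] 0)
      (𝓝 (K * (M / (M + φ z ^ 2)) * L y)) := by
    have hcont : Continuous fun ε : ℝ => K * (M / (M + φ z ^ 2)) * (L y + ε * φ y ^ 2) := by
      fun_prop
    simpa using (hcont.tendsto 0).mono_left nhdsWithin_le_nhds
  exact ge_of_tendsto hlim (eventually_nhdsWithin_of_forall hbound)

lemma nonpos_of_mem_clos (hD : LorentzDatum n C U L) (hf : IsSolution C V L κ f)
    (hκ0 : κ ≠ 0) (hκ : κ < 2 * n) : ∀ y ∈ clos C, f y ≤ 0 := by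
  obtain ⟨K, hK0, hK⟩ := hD.exists_le_mul hf hκ0
  obtain ⟨θ, hθ0, hθ1, hstep⟩ := hD.exists_contraction hf hκ0 hκ
  have hiter : ∀ j : ℕ, ∀ y ∈ C, f y ≤ K * θ ^ j * L y := by
    intro j
    induction j with
    | zero => simpa using hK
    | succ j ih => simpa [pow_succ, mul_assoc] using hstep _ (by positivity) ih
  intro y hy
  by_cases hyC : y ∈ C
  · have hlim : Tendsto (fun j : ℕ => K * θ ^ j * L y) atTop (𝓝 0) := by
      simpa using ((tendsto_pow_atTop_nhds_zero_of_lt_one hθ0 hθ1).const_mul K).mul_const (L y)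
    exact ge_of_tendsto' hlim fun j => hiter j y hyC
  · exact (hD.eq_zero_of_mem_clos_of_notMem hf hκ0 hy hyC).le

end LorentzDatum

theorem ricci_scalar_vanishes_general
    {n : ℕ} (C U : Set (Fin n → ℝ)) (L : (Fin n → ℝ) → ℝ)
    (hD : LorentzDatum n C U L)
    (κ : ℝ) (hκ0 : κ ≠ 0) (hκ : κ < 2 * (n : ℝ))
    (V : Set (Fin n → ℝ)) (hVopen : IsOpen V) (hCV : clos C ⊆ V)
    (f : (Fin n → ℝ) → ℝ)
    (hfsmooth : ContDiffOn ℝ (⊤ : ℕ∞) f V) (hfhom : PosHom 2 V f)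
    (heq : ∀ y ∈ C, κ * f y - L y * ∑ a, ∑ b, ginv L y a b * pd (pd f a) b y = 0) :
    ∀ y ∈ clos C, f y = 0 := by
  have hf : IsSolution C V L κ f := ⟨hVopen, hCV, hfsmooth.of_le (WithTop.coe_le_coe.2 le_top),
    hfhom, fun y hy => sub_eq_zero.1 (heq y hy)⟩
  intro y hy
  exact le_antisymm (hD.nonpos_of_mem_clos hf hκ0 hκ y hy)
    (neg_nonpos.1 (hD.nonpos_of_mem_clos hf.neg hκ0 hκ y hy))

/-- **Fiberwise form of Thm. 5.17** (vanishing of the Ricci scalar). Let `(C, L)` be a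
properly Lorentz fiberwise datum and `κ ≠ 0` with `κ < 2n`. If `f` is smooth and
positively 2-homogeneous on an open conic neighborhood of the closure of `C` and satisfies
`κ f − L g^{ab} f_{·a·b} = 0` on `C`, then `f = 0` on that closure. In particular (for
`n ≥ 3`, taking `κ = n + 2`), a solution of the Finslerian metric variational equation
`(n+2) f − L g^{ab} f_{·a·b} = 0` vanishes; applied to the Ricci scalar of a nonlinear
connection smoothly extendible to the boundary, this is Theorem C of the paper. -/
theorem ricci_scalar_vanishes
    {n : ℕ} (hn : 2 ≤ n) (C U : Set (Fin n → ℝ)) (L : (Fin n → ℝ) → ℝ)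
    (hD : LorentzDatum n C U L)
    (κ : ℝ) (hκ0 : κ ≠ 0) (hκ : κ < 2 * (n : ℝ))
    (V : Set (Fin n → ℝ)) (hVopen : IsOpen V) (hVconic : Conic V)
    (hVnz : ∀ y ∈ V, y ≠ 0) (hCV : clos C ⊆ V)
    (f : (Fin n → ℝ) → ℝ)
    (hfsmooth : ContDiffOn ℝ (⊤ : ℕ∞) f V) (hfhom : PosHom 2 V f)
    (heq : ∀ y ∈ C, κ * f y - L y * ∑ a, ∑ b, ginv L y a b * pd (pd f a) b y = 0) :
    ∀ y ∈ clos C, f y = 0 :=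
  ricci_scalar_vanishes_general C U L hD κ hκ0 hκ V hVopen hCV f hfsmooth hfhom heq
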